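/- Let G be a regular graph with degree D and suppose every edge x~y has Ollivier Ricci curvature κ(x,y) ≥ K > 0. Then diam(G) ≤ 2/K. -/

import Mathlib

/-! Transport plans glue along a common marginal, so `W₁` satisfies the triangle inequality;
together with the curvature bound on edges this gives
`W₁(μ_x, μ_y) ≤ d(x, y) (1 - K D / (D + 1))` along a geodesic. On the other hand, testing
against the 1-Lipschitz function `d(x, ·)` gives `W₁(μ_x, μ_y) ≥ d(x, y) - 2 D / (D + 1)`, since
each ball has mean radius `D / (D + 1)`. Comparing the two at a diametral pair yields
`K · diam ≤ 2`. -/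

open Finset

namespace BMS

open scoped Classical

variable {V : Type*}

/-- The uniform probability measure on the closed 1-ball of `x` in a `D`-regular graph. -/
noncomputable def mu (G : SimpleGraph V) (D : ℕ) (x : V) : V → ℝ :=
  fun v => if G.dist x v ≤ 1 then 1 / (D + 1) else 0

/-- The L¹-Wasserstein distance between `μ_x` and `μ_y`, as an infimum over transport plans. -/
noncomputable def W1 (G : SimpleGraph V) [Fintype V] (D : ℕ) (x y : V) : ℝ :=
  sInf { c : ℝ | ∃ π : V → V → ℝ,
    (∀ u v, 0 ≤ π u v) ∧
    (∀ u, ∑ v, π u v = mu G D x u) ∧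
    (∀ v, ∑ u, π u v = mu G D y v) ∧
    c = ∑ u, ∑ v, (G.dist u v : ℝ) * π u v }

/-- Ollivier Ricci curvature (Lin–Lu–Yau normalization for regular graphs). -/
noncomputable def kappa (G : SimpleGraph V) [Fintype V] (D : ℕ) (x y : V) : ℝ :=
  ((D + 1) / D) * (1 - W1 G D x y)

/-- `G` is Bonnet–Myers sharp: the infimum of the curvature over edges equals `2 / L`. -/
def BMSharp (G : SimpleGraph V) [Fintype V] (D L : ℕ) : Prop :=
  sInf { k : ℝ | ∃ x y, G.Adj x y ∧ k = kappa G D x y } = 2 / (L : ℝ)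

/-- Number of neighbors of `y` at distance `k` from `x0`. -/
noncomputable def sphDeg (G : SimpleGraph V) [Fintype V] (x0 y : V) (k : ℕ) : ℕ :=
  (Finset.univ.filter (fun v => G.Adj y v ∧ G.dist x0 v = k)).card

/-- Number of triangles containing the edge `x ~ y` (common neighbors of `x` and `y`). -/
noncomputable def tri (G : SimpleGraph V) [Fintype V] (x y : V) : ℕ :=
  (Finset.univ.filter (fun v => G.Adj x v ∧ G.Adj y v)).card

/-- A good optimal transport map from `B_1(a)` to `B_1(b)`: a bijection between the 1-balls,
fixing exactly the vertices of `B_1(a) ∩ B_1(b)` (among the domain), whose cost realizes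
the Wasserstein distance `W1 (μ_a, μ_b)`. -/
def goodMap (G : SimpleGraph V) [Fintype V] (D : ℕ) (a b : V) (T : V → V) : Prop :=
  Set.BijOn T {v | G.dist a v ≤ 1} {v | G.dist b v ≤ 1} ∧
  (∀ v, G.dist a v ≤ 1 → (T v = v ↔ G.dist b v ≤ 1)) ∧
  (1 / (D + 1 : ℝ)) *
      ∑ v ∈ Finset.univ.filter (fun v => G.dist a v ≤ 1), (G.dist v (T v) : ℝ) =
    W1 G D a b

section Transport

variable {α : Type*} [Fintype α]

structure IsPlan (m₁ m₂ : α → ℝ) (π : α → α → ℝ) : Prop where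
  nonneg : ∀ u v, 0 ≤ π u v
  sum_snd : ∀ u, ∑ v, π u v = m₁ u
  sum_fst : ∀ v, ∑ u, π u v = m₂ v

def cost (c : α → α → ℝ) (π : α → α → ℝ) : ℝ :=
  ∑ u, ∑ v, c u v * π u v

/-- Composition of transport plans through the common middle marginal `m₂`. Where `m₂ v = 0`
both plans vanish, so the junk value of `/ 0` is harmless. -/
noncomputable def glue (m₂ : α → ℝ) (π₁ π₂ : α → α → ℝ) (u w : α) : ℝ :=
  ∑ v, π₁ u v * π₂ v w / m₂ v

variable {m₁ m₂ m₃ : α → ℝ} {π π₁ π₂ : α → α → ℝ} {c : α → α → ℝ}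

namespace IsPlan

lemma eq_zero_of_fst_eq_zero (hπ : IsPlan m₁ m₂ π) {u : α} (hu : m₁ u = 0) (v : α) :
    π u v = 0 :=
  (sum_eq_zero_iff_of_nonneg fun w _ => hπ.nonneg u w).mp ((hπ.sum_snd u).trans hu) v
    (mem_univ v)

lemma eq_zero_of_snd_eq_zero (hπ : IsPlan m₁ m₂ π) {v : α} (hv : m₂ v = 0) (u : α) :
    π u v = 0 :=
  (sum_eq_zero_iff_of_nonneg fun w _ => hπ.nonneg w v).mp ((hπ.sum_fst v).trans hv) u
    (mem_univ u)

lemma snd_nonneg (hπ : IsPlan m₁ m₂ π) (v : α) : 0 ≤ m₂ v :=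
  hπ.sum_fst v ▸ sum_nonneg fun u _ => hπ.nonneg u v

lemma product (h₁ : ∀ u, 0 ≤ m₁ u) (h₂ : ∀ v, 0 ≤ m₂ v) (hs₁ : ∑ u, m₁ u = 1)
    (hs₂ : ∑ v, m₂ v = 1) : IsPlan m₁ m₂ (fun u v => m₁ u * m₂ v) where
  nonneg u v := mul_nonneg (h₁ u) (h₂ v)
  sum_snd u := by rw [← mul_sum, hs₂, mul_one]
  sum_fst v := by rw [← sum_mul, hs₁, one_mul]

lemma diagonal (h : ∀ u, 0 ≤ m₁ u) : IsPlan m₁ m₁ (fun u v => if u = v then m₁ u else 0) where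
  nonneg u v := by split_ifs <;> simp [h]
  sum_snd u := by simp
  sum_fst v := by simp

lemma sum_sub_sum_le_cost (hπ : IsPlan m₁ m₂ π) {f : α → ℝ} (hf : ∀ u v, f v - f u ≤ c u v) :
    ∑ v, f v * m₂ v - ∑ u, f u * m₁ u ≤ cost c π := by
  have hdiff : ∑ v, f v * m₂ v - ∑ u, f u * m₁ u = ∑ u, ∑ v, (f v - f u) * π u v := by
    simp only [sub_mul, sum_sub_distrib, ← hπ.sum_fst, ← hπ.sum_snd, mul_sum]
    rw [sum_comm (f := fun v u => f v * π u v)]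
  rw [hdiff]
  exact sum_le_sum fun u _ => sum_le_sum fun v _ => mul_le_mul_of_nonneg_right (hf u v)
    (hπ.nonneg u v)

lemma sum_glue_snd (h₁ : IsPlan m₁ m₂ π₁) (h₂ : IsPlan m₂ m₃ π₂) (u v : α) :
    ∑ w, π₁ u v * π₂ v w / m₂ v = π₁ u v := by
  rw [← sum_div, ← mul_sum, h₂.sum_snd]
  by_cases hv : m₂ v = 0
  · simp [h₁.eq_zero_of_snd_eq_zero hv]
  · exact mul_div_cancel_right₀ _ hv

lemma sum_glue_fst (h₁ : IsPlan m₁ m₂ π₁) (h₂ : IsPlan m₂ m₃ π₂) (v w : α) :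
    ∑ u, π₁ u v * π₂ v w / m₂ v = π₂ v w := by
  rw [← sum_div, ← sum_mul, h₁.sum_fst]
  by_cases hv : m₂ v = 0
  · simp [h₂.eq_zero_of_fst_eq_zero hv]
  · rw [mul_comm]; exact mul_div_cancel_right₀ _ hv

lemma glue (h₁ : IsPlan m₁ m₂ π₁) (h₂ : IsPlan m₂ m₃ π₂) : IsPlan m₁ m₃ (glue m₂ π₁ π₂) where
  nonneg u w := sum_nonneg fun v _ =>
    div_nonneg (mul_nonneg (h₁.nonneg u v) (h₂.nonneg v w)) (h₁.snd_nonneg v)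
  sum_snd u := by
    simp only [BMS.glue]
    rw [sum_comm]
    simp only [sum_glue_snd h₁ h₂, h₁.sum_snd]
  sum_fst w := by
    simp only [BMS.glue]
    rw [sum_comm]
    simp only [sum_glue_fst h₁ h₂, h₂.sum_fst]

lemma cost_glue_le (h₁ : IsPlan m₁ m₂ π₁) (h₂ : IsPlan m₂ m₃ π₂)
    (htri : ∀ u v w, c u w ≤ c u v + c v w) :
    cost c (BMS.glue m₂ π₁ π₂) ≤ cost c π₁ + cost c π₂ := by
  set g := fun u v w => π₁ u v * π₂ v w / m₂ v
  have hg : ∀ u v w, 0 ≤ g u v w := fun u v w =>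
    div_nonneg (mul_nonneg (h₁.nonneg u v) (h₂.nonneg v w)) (h₁.snd_nonneg v)
  calc cost c (BMS.glue m₂ π₁ π₂)
      ≤ ∑ u, ∑ w, ∑ v, (c u v + c v w) * g u v w := by
        refine sum_le_sum fun u _ => sum_le_sum fun w _ => ?_
        simp only [BMS.glue, mul_sum]
        exact sum_le_sum fun v _ => mul_le_mul_of_nonneg_right (htri u v w) (hg u v w)
    _ = ∑ u, ∑ v, ∑ w, c u v * g u v w + ∑ w, ∑ v, ∑ u, c v w * g u v w := by
        simp only [add_mul, sum_add_distrib]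
        congr 1
        · exact sum_congr rfl fun u _ => sum_comm
        · rw [sum_comm]; exact sum_congr rfl fun w _ => sum_comm
    _ = cost c π₁ + cost c π₂ := by
        simp only [← mul_sum, g, sum_glue_snd h₁ h₂, sum_glue_fst h₁ h₂]
        rw [cost, cost, sum_comm (f := fun w v => c v w * π₂ v w)]

end IsPlan

lemma cost_diagonal (hc : ∀ u, c u u = 0) :
    cost c (fun u v => if u = v then m₁ u else 0) = 0 :=
  sum_eq_zero fun u _ => by simp [hc]

end Transport

lemma le_length_mul_of_adj {G : SimpleGraph V} {F : V → V → ℝ} {s : ℝ}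
    (hself : ∀ x, F x x ≤ 0) (hadj : ∀ x y, G.Adj x y → F x y ≤ s)
    (htri : ∀ x y z, F x z ≤ F x y + F y z) {x y : V} (p : G.Walk x y) :
    F x y ≤ p.length * s := by
  induction p with
  | nil => simpa using hself _
  | @cons u v w h q ih =>
    rw [SimpleGraph.Walk.length_cons]
    push_cast
    linarith [htri u v w, hadj u v h]

section Graph

lemma mu_nonneg {G : SimpleGraph V} {D : ℕ} (x v : V) : 0 ≤ mu G D x v := by
  unfold mu; split_ifs <;> positivity

variable [Fintype V] {G : SimpleGraph V} {D : ℕ}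

lemma filter_dist_le_one (hconn : G.Connected) (x : V) :
    univ.filter (fun v => G.dist x v ≤ 1) = insert x (G.neighborFinset x) := by
  ext v
  simp only [mem_filter, mem_univ, true_and, mem_insert, SimpleGraph.mem_neighborFinset,
    Nat.le_one_iff_eq_zero_or_eq_one, hconn.dist_eq_zero_iff, SimpleGraph.dist_eq_one_iff_adj]
  exact or_congr_left eq_comm

lemma sum_mu (hconn : G.Connected) (hreg : G.IsRegularOfDegree D) (x : V) :
    ∑ v, mu G D x v = 1 := by
  simp only [mu]
  rw [← sum_filter, sum_const, filter_dist_le_one hconn,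
    card_insert_of_notMem (by simp), SimpleGraph.card_neighborFinset_eq_degree, hreg x,
    nsmul_eq_mul]
  push_cast
  field_simp

lemma sum_dist_mul_mu (hconn : G.Connected) (hreg : G.IsRegularOfDegree D) (x : V) :
    ∑ v, (G.dist x v : ℝ) * mu G D x v = D / (D + 1) := by
  simp only [mu, mul_ite, mul_zero]
  rw [← sum_filter, filter_dist_le_one hconn, sum_insert (by simp), SimpleGraph.dist_self,
    sum_congr rfl fun v hv => by
      rw [SimpleGraph.dist_eq_one_iff_adj.mpr ((G.mem_neighborFinset x v).mp hv)],
    sum_const, SimpleGraph.card_neighborFinset_eq_degree, hreg x]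
  simp [div_eq_mul_inv]

lemma W1_le_cost {x y : V} {π : V → V → ℝ} (hπ : IsPlan (mu G D x) (mu G D y) π) :
    W1 G D x y ≤ cost (fun u v => (G.dist u v : ℝ)) π := by
  refine csInf_le ⟨0, ?_⟩ ⟨π, hπ.nonneg, hπ.sum_snd, hπ.sum_fst, rfl⟩
  rintro _ ⟨π', hπ', -, -, rfl⟩
  exact sum_nonneg fun u _ => sum_nonneg fun v _ => mul_nonneg (Nat.cast_nonneg _) (hπ' u v)

lemma isPlan_product_mu (hconn : G.Connected) (hreg : G.IsRegularOfDegree D) (x y : V) :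
    IsPlan (mu G D x) (mu G D y) (fun u v => mu G D x u * mu G D y v) :=
  .product (mu_nonneg x) (mu_nonneg y) (sum_mu hconn hreg x) (sum_mu hconn hreg y)

lemma le_W1 (hconn : G.Connected) (hreg : G.IsRegularOfDegree D) {x y : V} {b : ℝ}
    (hb : ∀ π, IsPlan (mu G D x) (mu G D y) π → b ≤ cost (fun u v => (G.dist u v : ℝ)) π) :
    b ≤ W1 G D x y := by
  have hπ := isPlan_product_mu hconn hreg x y
  refine le_csInf ?_ ?_
  · exact ⟨_, _, hπ.nonneg, hπ.sum_snd, hπ.sum_fst, rfl⟩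
  rintro _ ⟨π, h₀, h₁, h₂, rfl⟩
  exact hb π ⟨h₀, h₁, h₂⟩

lemma exists_isPlan_cost_lt (hconn : G.Connected) (hreg : G.IsRegularOfDegree D) (x y : V)
    {ε : ℝ} (hε : 0 < ε) : ∃ π, IsPlan (mu G D x) (mu G D y) π ∧
      cost (fun u v => (G.dist u v : ℝ)) π < W1 G D x y + ε := by
  have hπ := isPlan_product_mu hconn hreg x y
  have hlt := lt_add_of_pos_right (W1 G D x y) hε
  nth_rewrite 1 [W1] at hlt
  obtain ⟨_, ⟨π, h₀, h₁, h₂, rfl⟩, hlt⟩ :=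
    exists_lt_of_csInf_lt (by exact ⟨_, _, hπ.nonneg, hπ.sum_snd, hπ.sum_fst, rfl⟩) hlt
  exact ⟨π, ⟨h₀, h₁, h₂⟩, hlt⟩

lemma W1_self_nonpos (x : V) : W1 G D x x ≤ 0 :=
  (W1_le_cost (.diagonal (mu_nonneg x))).trans_eq (cost_diagonal fun _ => by simp)

lemma W1_triangle (hconn : G.Connected) (hreg : G.IsRegularOfDegree D) (x y z : V) :
    W1 G D x z ≤ W1 G D x y + W1 G D y z := by
  refine le_of_forall_pos_le_add fun ε hε => ?_
  obtain ⟨π₁, h₁, hc₁⟩ := exists_isPlan_cost_lt hconn hreg x y (half_pos hε)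
  obtain ⟨π₂, h₂, hc₂⟩ := exists_isPlan_cost_lt hconn hreg y z (half_pos hε)
  have hglue := h₁.cost_glue_le h₂ (c := fun u v => (G.dist u v : ℝ))
    fun u v w => by exact_mod_cast hconn.dist_triangle
  linarith [W1_le_cost (h₁.glue h₂)]

lemma dist_sub_le_W1 (hconn : G.Connected) (hreg : G.IsRegularOfDegree D) (x y : V) :
    (G.dist x y : ℝ) - 2 * D / (D + 1) ≤ W1 G D x y := by
  refine le_W1 hconn hreg fun π hπ => ?_
  have hdist : ∀ u v w, (G.dist u w : ℝ) ≤ G.dist u v + G.dist v w := fun u v w => by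
    exact_mod_cast hconn.dist_triangle
  calc (G.dist x y : ℝ) - 2 * D / (D + 1)
      = ∑ v, (G.dist x y - G.dist y v : ℝ) * mu G D y v - ∑ v, (G.dist x v : ℝ) * mu G D x v := by
        simp only [sub_mul, sum_sub_distrib, sum_mu hconn hreg,
          sum_dist_mul_mu hconn hreg, ← mul_sum]
        ring
    _ ≤ ∑ v, (G.dist x v : ℝ) * mu G D y v - ∑ v, (G.dist x v : ℝ) * mu G D x v := by
        gcongr with v
        · exact mu_nonneg y v
        · rw [SimpleGraph.dist_comm (u := y)]
          linarith [hdist x v y]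
    _ ≤ cost (fun u v => (G.dist u v : ℝ)) π :=
        hπ.sum_sub_sum_le_cost fun u v => by linarith [hdist x u v]

lemma W1_le_of_le_kappa (hD : 0 < D) {x y : V} {K : ℝ} (hK : K ≤ kappa G D x y) :
    W1 G D x y ≤ 1 - K * D / (D + 1) := by
  have hD' : (0 : ℝ) < D := by exact_mod_cast hD
  rw [kappa, ← div_le_iff₀' (by positivity), div_div_eq_mul_div] at hK
  linarith

lemma W1_le_dist_mul (hconn : G.Connected) (hD : 0 < D) (hreg : G.IsRegularOfDegree D)
    {K : ℝ} (h : ∀ x y : V, G.Adj x y → K ≤ kappa G D x y) (x y : V) :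
    W1 G D x y ≤ G.dist x y * (1 - K * D / (D + 1)) := by
  obtain ⟨p, hp⟩ := hconn.exists_walk_length_eq_dist x y
  rw [← hp]
  exact le_length_mul_of_adj W1_self_nonpos (fun x y hxy => W1_le_of_le_kappa hD (h x y hxy))
    (W1_triangle hconn hreg) p

end Graph

theorem stmt [Fintype V] (G : SimpleGraph V) (hconn : G.Connected)
    (D : ℕ) (hD : 0 < D) (hreg : G.IsRegularOfDegree D)
    (K : ℝ) (hK : 0 < K) (h : ∀ x y : V, G.Adj x y → K ≤ kappa G D x y) :
    (G.diam : ℝ) ≤ 2 / K := by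
  have := hconn.nonempty
  obtain ⟨x, y, hxy⟩ := G.exists_dist_eq_diam
  have hW := (dist_sub_le_W1 hconn hreg x y).trans (W1_le_dist_mul hconn hD hreg h x y)
  have hD' : (0 : ℝ) < D := by exact_mod_cast hD
  rw [← hxy, le_div_iff₀ hK]
  refine le_of_mul_le_mul_right ?_ hD'
  field_simp at hW
  linarith

end BMS
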